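/- arXiv:2103.00763 — 8 statements merged into one kernel-verified Lean document; each statement's English description precedes it below -/
import Mathlib

section
/- For any nonnegative integer r, the function l(μ) = e^{-μ} μ^r / ∫_μ^∞ e^{-t} t^r dt is increasing in μ on (0, ∞). -/
/-!
Substituting `t = μ + x` and factoring out `e^{-μ} μ^r` gives
`1 / l(μ) = ∫₀^∞ e^{-x} (1 + x/μ)^r dx`, whose integrand decreases pointwise in `μ`.
-/

open MeasureTheory Set Real

section comp_add

variable {E : Type*} [NormedAddCommGroup E]

theorem integrableOn_Ioi_comp_add_right_iff (f : ℝ → E) (a b : ℝ) :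
    IntegrableOn (fun x => f (x + a)) (Ioi b) ↔ IntegrableOn f (Ioi (b + a)) := by
  have := (measurePreserving_add_right volume a).integrableOn_comp_preimage
    (measurableEmbedding_addRight a) (f := f) (s := Ioi (b + a))
  rwa [preimage_add_const_Ioi, add_sub_cancel_right] at this

theorem setIntegral_Ioi_comp_add_right [NormedSpace ℝ E] (f : ℝ → E) (a b : ℝ) :
    ∫ x in Ioi b, f (x + a) = ∫ t in Ioi (b + a), f t := by
  have := (measurePreserving_add_right volume a).setIntegral_preimage_emb
    (measurableEmbedding_addRight a) f (Ioi (b + a))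
  rwa [preimage_add_const_Ioi, add_sub_cancel_right] at this

end comp_add

theorem integrableOn_exp_neg_mul_pow_Ioi (r : ℕ) :
    IntegrableOn (fun t => exp (-t) * t ^ r) (Ioi 0) := by
  refine (GammaIntegral_convergent (s := r + 1) (by positivity)).congr_fun
    (fun t _ => ?_) measurableSet_Ioi
  simp [← rpow_natCast]

section scaled

variable (r : ℕ) {μ : ℝ}

theorem exp_neg_add_mul_pow_eq (hμ : 0 < μ) (x : ℝ) :
    exp (-(x + μ)) * (x + μ) ^ r = exp (-μ) * μ ^ r * (exp (-x) * (1 + x / μ) ^ r) := by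
  have : x + μ = μ * (1 + x / μ) := by field_simp; ring
  rw [neg_add, exp_add, this, mul_pow]
  ring

theorem integrableOn_exp_neg_mul_one_add_div_pow (hμ : 0 < μ) :
    IntegrableOn (fun x => exp (-x) * (1 + x / μ) ^ r) (Ioi 0) := by
  have h : IntegrableOn (fun x => exp (-(x + μ)) * (x + μ) ^ r) (Ioi 0) := by
    rw [integrableOn_Ioi_comp_add_right_iff (fun t => exp (-t) * t ^ r), zero_add]
    exact (integrableOn_exp_neg_mul_pow_Ioi r).mono_set (Ioi_subset_Ioi hμ.le)
  refine IntegrableOn.congr_fun (h.const_mul (exp (-μ) * μ ^ r)⁻¹) (fun x _ => ?_)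
    measurableSet_Ioi
  rw [exp_neg_add_mul_pow_eq r hμ, inv_mul_cancel_left₀ (by positivity)]

theorem one_le_integral_exp_neg_mul_one_add_div_pow (hμ : 0 < μ) :
    1 ≤ ∫ x in Ioi 0, exp (-x) * (1 + x / μ) ^ r := by
  refine integral_exp_neg_Ioi_zero.symm.trans_le <| setIntegral_mono_on
    (integrableOn_exp_neg_Ioi 0) (integrableOn_exp_neg_mul_one_add_div_pow r hμ)
    measurableSet_Ioi fun x (hx : 0 < x) => ?_
  have : 0 ≤ x / μ := by positivity
  exact le_mul_of_one_le_right (exp_nonneg _) (one_le_pow₀ (by linarith))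

theorem antitoneOn_integral_exp_neg_mul_one_add_div_pow :
    AntitoneOn (fun μ => ∫ x in Ioi 0, exp (-x) * (1 + x / μ) ^ r) (Ioi 0) := by
  rintro a (ha : 0 < a) b (hb : 0 < b) hab
  refine setIntegral_mono_on (integrableOn_exp_neg_mul_one_add_div_pow r hb)
    (integrableOn_exp_neg_mul_one_add_div_pow r ha) measurableSet_Ioi fun x (hx : 0 < x) => ?_
  have : x / b ≤ x / a := div_le_div_of_nonneg_left hx.le ha hab
  gcongr

theorem exp_neg_mul_pow_div_integral_eq_inv (hμ : 0 < μ) :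
    exp (-μ) * μ ^ r / ∫ t in Ioi μ, exp (-t) * t ^ r
      = (∫ x in Ioi 0, exp (-x) * (1 + x / μ) ^ r)⁻¹ := by
  rw [← zero_add μ, ← setIntegral_Ioi_comp_add_right, zero_add]
  simp_rw [exp_neg_add_mul_pow_eq r hμ]
  rw [integral_const_mul, div_mul_cancel_left₀ (by positivity)]

end scaled

theorem upper_gamma_hazard_increasing (r : ℕ) :
    MonotoneOn
      (fun μ : ℝ => Real.exp (-μ) * μ ^ r / ∫ t in Set.Ioi μ, Real.exp (-t) * t ^ r)
      (Set.Ioi 0) := by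
  intro a ha b hb hab
  simp only [exp_neg_mul_pow_div_integral_eq_inv r ha, exp_neg_mul_pow_div_integral_eq_inv r hb]
  exact inv_anti₀ (one_pos.trans_le (one_le_integral_exp_neg_mul_one_add_div_pow r hb))
    (antitoneOn_integral_exp_neg_mul_one_add_div_pow r ha hb hab)
end

section
/- For any nonnegative integer r, the function μ ↦ e^{-μ} μ^r / ∫_0^μ e^{-t} t^r dt is decreasing in μ on (0, ∞). -/
/-!
Rescaling `t = μ u` gives `∫₀^μ g / g μ = μ ∫₀¹ g (μ u) / g μ du`.
For `g t = e^{-t} t^r` the integrand is `e^{μ (1 - u)} u^r`, which increases with `μ`, so the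
reciprocal of the ratio in the theorem is a product of two positive increasing functions of `μ`.
-/

open MeasureTheory Set

theorem intervalIntegral_zero_eq_mul_integral_comp_mul (g : ℝ → ℝ) (μ : ℝ) :
    ∫ t in (0 : ℝ)..μ, g t = μ * ∫ u in (0 : ℝ)..1, g (μ * u) := by
  rw [← smul_eq_mul, intervalIntegral.smul_integral_comp_mul_left, mul_zero, mul_one]

theorem antitoneOn_div_intervalIntegral_of_monotoneOn_ratio {g : ℝ → ℝ} (hg : Continuous g)
    (hpos : ∀ t, 0 < t → 0 < g t)
    (hmono : ∀ u ∈ Icc (0 : ℝ) 1, MonotoneOn (fun μ => g (μ * u) / g μ) (Ioi 0)) :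
    AntitoneOn (fun μ => g μ / ∫ t in (0 : ℝ)..μ, g t) (Ioi 0) := by
  set J : ℝ → ℝ := fun μ => ∫ u in (0 : ℝ)..1, g (μ * u) / g μ
  have hJ_int (μ : ℝ) : IntervalIntegrable (fun u => g (μ * u) / g μ) volume 0 1 :=
    (by fun_prop : Continuous fun u => g (μ * u) / g μ).intervalIntegrable 0 1
  have hJ_pos {μ : ℝ} (hμ : 0 < μ) : 0 < J μ :=
    intervalIntegral.intervalIntegral_pos_of_pos_on (hJ_int μ)
      (fun u hu => div_pos (hpos _ (mul_pos hμ hu.1)) (hpos μ hμ)) one_pos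
  have hJ_mono : MonotoneOn J (Ioi 0) := fun a ha b hb hab =>
    intervalIntegral.integral_mono_on zero_le_one (hJ_int a) (hJ_int b)
      fun u hu => hmono u hu ha hb hab
  have h_eq {μ : ℝ} (hμ : 0 < μ) : g μ / ∫ t in (0 : ℝ)..μ, g t = (μ * J μ)⁻¹ := by
    have : J μ = (∫ u in (0 : ℝ)..1, g (μ * u)) / g μ := intervalIntegral.integral_div _ _
    rw [intervalIntegral_zero_eq_mul_integral_comp_mul, this, mul_div_assoc', inv_div]
  intro a ha b hb hab
  simp only [h_eq ha, h_eq hb]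
  exact inv_anti₀ (mul_pos ha (hJ_pos ha))
    (mul_le_mul hab (hJ_mono ha hb hab) (hJ_pos ha).le hb.le)

theorem lower_gamma_ratio_decreasing (r : ℕ) :
    AntitoneOn
      (fun μ : ℝ => Real.exp (-μ) * μ ^ r / ∫ t in (0 : ℝ)..μ, Real.exp (-t) * t ^ r)
      (Set.Ioi 0) := by
  refine antitoneOn_div_intervalIntegral_of_monotoneOn_ratio (by fun_prop)
    (fun t ht => by positivity) fun u hu a ha b hb hab => ?_
  have h_ratio {μ : ℝ} (hμ : 0 < μ) :
      Real.exp (-(μ * u)) * (μ * u) ^ r / (Real.exp (-μ) * μ ^ r)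
        = Real.exp (μ * (1 - u)) * u ^ r := by
    rw [mul_pow, mul_sub, mul_one, sub_eq_neg_add, Real.exp_add, Real.exp_neg μ]
    field_simp
  simp only [h_ratio (mem_Ioi.mp ha), h_ratio (mem_Ioi.mp hb)]
  have h_one_sub_u : 0 ≤ 1 - u := sub_nonneg.mpr hu.2
  gcongr
  exact pow_nonneg hu.1 r
end

section
/- Let X₁, ..., Xₙ be independent Poisson random variables with parameters μ₁, ..., μₙ, and Y₁, ..., Yₙ independent Poisson random variables with parameters μ₁*, ..., μₙ*, all parameters positive. If (μ₁, ..., μₙ) majorizes (μ₁*, ..., μₙ*), then max(X₁,...,Xₙ) ≥_st max(Y₁,...,Yₙ), i.e., for every nonnegative integer r, P(max Xᵢ ≤ r) ≤ P(max Yᵢ ≤ r). -/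
/-!
By independence, `P(max Xᵢ ≤ r) = ∏ F(μᵢ)` with `F(μ) = P(Poisson(μ) ≤ r)`. The derivative of `F`
telescopes to `-p_r(μ)`, so `(log F)' = -p_r / F`, and `F / p_r = ∑_{k ≤ r} (r!/k!) μ^(k-r)`
decreases in `μ`: `log F` is concave. Karamata's inequality for the concave `log F` (tangent lines
at the sorted `μ'`, then Abel summation against the prefix-sum inequalities of majorization) gives
`∑ log F(μᵢ) ≤ ∑ log F(μ'ᵢ)`.
-/

open MeasureTheory ProbabilityTheory

/-- `x` majorizes `y`. -/
def Majorizes {n : ℕ} (x y : Fin n → ℝ) : Prop :=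
  (∀ s : Finset (Fin n), ∃ t : Finset (Fin n),
      t.card = s.card ∧ ∑ i ∈ s, y i ≤ ∑ i ∈ t, x i) ∧
  ∑ i, x i = ∑ i, y i

open Finset Real
open scoped Nat

theorem Finset.sum_le_sum_of_card_eq_of_forall_notMem_le {ι M : Type*} [AddCommMonoid M]
    [LinearOrder M] [IsOrderedAddMonoid M] {f : ι → M} {s t : Finset ι} (hcard : #t = #s)
    (hs : ∀ i ∈ s, ∀ j ∉ s, f j ≤ f i) : ∑ i ∈ t, f i ≤ ∑ i ∈ s, f i := by
  classical
  have hcard' : #(t \ s) = #(s \ t) := by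
    have hts := card_sdiff_add_card_inter t s
    have hst := card_sdiff_add_card_inter s t
    rw [inter_comm] at hst
    omega
  have hsdiff : ∑ i ∈ t \ s, f i ≤ ∑ i ∈ s \ t, f i := by
    rcases (s \ t).eq_empty_or_nonempty with hst | ⟨i₀, hi₀⟩
    · rw [hst, card_empty, card_eq_zero] at hcard'
      rw [hst, hcard']
    · obtain ⟨m, hm, hmin⟩ := exists_min_image (s \ t) f ⟨i₀, hi₀⟩
      calc ∑ i ∈ t \ s, f i ≤ #(t \ s) • f m :=
            sum_le_card_nsmul _ _ _ fun j hj ↦ hs m (mem_sdiff.1 hm).1 j (mem_sdiff.1 hj).2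
        _ = #(s \ t) • f m := by rw [hcard']
        _ ≤ ∑ i ∈ s \ t, f i := card_nsmul_le_sum _ _ _ hmin
  rw [← sum_inter_add_sum_sdiff t s, ← sum_inter_add_sum_sdiff s t, inter_comm]
  exact add_le_add_right hsdiff _

theorem sum_range_mul_nonpos_of_sum_range_nonneg {c d : ℕ → ℝ} {n : ℕ}
    (hc : ∀ i, i + 1 < n → c i ≤ c (i + 1)) (hd : ∀ k ≤ n, 0 ≤ ∑ i ∈ range k, d i)
    (htot : ∑ i ∈ range n, d i = 0) : ∑ i ∈ range n, c i * d i ≤ 0 := by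
  have hparts := sum_range_by_parts c d n
  simp only [smul_eq_mul] at hparts
  rw [hparts, htot, mul_zero, zero_sub, neg_nonpos]
  refine sum_nonneg fun i hi ↦ mul_nonneg ?_ (hd _ ?_)
  · exact sub_nonneg.2 (hc i (by rw [mem_range] at hi; omega))
  · rw [mem_range] at hi; omega

section DecreasingRearrangement

variable {α : Type*} [LinearOrder α] {n : ℕ}

def antitonePerm (v : Fin n → α) : Equiv.Perm (Fin n) := Fin.revPerm.trans (Tuple.sort v)

theorem antitone_comp_antitonePerm (v : Fin n → α) : Antitone (v ∘ antitonePerm v) :=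
  fun _ _ hij ↦ Tuple.monotone_sort v (Fin.rev_le_rev.2 hij)

variable [AddCommMonoid α]

-- Indexed by `ℕ`, so that prefix sums are sums over `range k` (Abel summation).
def decreasingRearrangement (v : Fin n → α) (i : ℕ) : α :=
  if h : i < n then v (antitonePerm v ⟨i, h⟩) else 0

theorem decreasingRearrangement_of_lt (v : Fin n → α) {i : ℕ} (h : i < n) :
    decreasingRearrangement v i = v (antitonePerm v ⟨i, h⟩) :=
  dif_pos h

theorem decreasingRearrangement_le_of_le (v : Fin n → α) {i j : ℕ} (hij : i ≤ j) (hj : j < n) :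
    decreasingRearrangement v j ≤ decreasingRearrangement v i := by
  rw [decreasingRearrangement_of_lt v hj, decreasingRearrangement_of_lt v (hij.trans_lt hj)]
  exact antitone_comp_antitonePerm v (Fin.mk_le_mk.2 hij)

theorem decreasingRearrangement_mem (v : Fin n → α) {s : Set α} (hv : ∀ i, v i ∈ s) {i : ℕ}
    (hi : i < n) : decreasingRearrangement v i ∈ s := by
  rw [decreasingRearrangement_of_lt v hi]
  exact hv _

theorem sum_range_decreasingRearrangement {M : Type*} [AddCommMonoid M] (v : Fin n → α)
    (f : α → M) : ∑ i ∈ range n, f (decreasingRearrangement v i) = ∑ i, f (v i) := by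
  calc ∑ i ∈ range n, f (decreasingRearrangement v i)
      = ∑ i : Fin n, f (v (antitonePerm v i)) := by
        rw [← Fin.sum_univ_eq_sum_range]
        exact sum_congr rfl fun i _ ↦ by rw [decreasingRearrangement_of_lt v i.2]
    _ = ∑ i, f (v i) := Equiv.sum_comp (antitonePerm v) (f ∘ v)

theorem exists_sum_eq_sum_range_decreasingRearrangement {k : ℕ}
    (v : Fin n → α) (hk : k ≤ n) :
    ∃ s : Finset (Fin n), #s = k ∧ (∀ i ∈ s, ∀ j ∉ s, v j ≤ v i) ∧
      ∑ i ∈ s, v i = ∑ i ∈ range k, decreasingRearrangement v i := by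
  set σ := antitonePerm v
  refine ⟨univ.map ((Fin.castLEEmb hk).trans σ.toEmbedding), by simp, ?_, ?_⟩
  · intro i hi j hj
    obtain ⟨a, -, rfl⟩ := mem_map.1 hi
    have hkj : k ≤ (σ.symm j : ℕ) := by
      by_contra! h
      exact hj (mem_map.2 ⟨⟨σ.symm j, h⟩, mem_univ _, by simp⟩)
    simpa [σ] using antitone_comp_antitonePerm v
      (show Fin.castLE hk a ≤ σ.symm j from Fin.le_def.2 (a.2.le.trans hkj))
  · rw [sum_map, ← Fin.sum_univ_eq_sum_range]
    exact sum_congr rfl fun a _ ↦ by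
      rw [decreasingRearrangement_of_lt v (a.2.trans_le hk)]; rfl

end DecreasingRearrangement

theorem sum_le_sum_range_decreasingRearrangement {α : Type*} [AddCommMonoid α] [LinearOrder α]
    [IsOrderedAddMonoid α] {n : ℕ} (v : Fin n → α) (t : Finset (Fin n)) :
    ∑ i ∈ t, v i ≤ ∑ i ∈ range #t, decreasingRearrangement v i := by
  obtain ⟨s, hs, hsup, hsum⟩ := exists_sum_eq_sum_range_decreasingRearrangement v
    (card_le_univ t |>.trans_eq (Fintype.card_fin n))
  rw [← hsum]
  exact sum_le_sum_of_card_eq_of_forall_notMem_le hs.symm hsup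

theorem Majorizes.sum_range_decreasingRearrangement_le {n : ℕ} {x y : Fin n → ℝ}
    (hxy : Majorizes x y) {k : ℕ} (hk : k ≤ n) :
    ∑ i ∈ range k, decreasingRearrangement y i ≤ ∑ i ∈ range k, decreasingRearrangement x i := by
  obtain ⟨s, rfl, -, hsum⟩ := exists_sum_eq_sum_range_decreasingRearrangement y hk
  obtain ⟨t, ht, hst⟩ := hxy.1 s
  rw [← hsum, ← ht]
  exact hst.trans (sum_le_sum_range_decreasingRearrangement x t)

theorem antitoneOn_of_le_add_mul_sub {D : Set ℝ} {f g : ℝ → ℝ}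
    (hf : ∀ a ∈ D, ∀ b ∈ D, f b ≤ f a + g a * (b - a)) : AntitoneOn g D := by
  intro a ha b hb hab
  rcases hab.eq_or_lt with rfl | hlt
  · exact le_rfl
  · nlinarith [hf a ha b hb, hf b hb a ha]

/-- Karamata's inequality. -/
theorem sum_range_le_sum_range_of_le_add_mul_sub {a b : ℕ → ℝ} {n : ℕ} {D : Set ℝ}
    {f g : ℝ → ℝ} (hf : ∀ u ∈ D, ∀ v ∈ D, f v ≤ f u + g u * (v - u)) (ha : ∀ i < n, a i ∈ D)
    (hb : ∀ i < n, b i ∈ D) (hb_anti : ∀ i, i + 1 < n → b (i + 1) ≤ b i)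
    (hprefix : ∀ k ≤ n, ∑ i ∈ range k, b i ≤ ∑ i ∈ range k, a i)
    (htot : ∑ i ∈ range n, a i = ∑ i ∈ range n, b i) :
    ∑ i ∈ range n, f (a i) ≤ ∑ i ∈ range n, f (b i) := by
  have hgb : ∀ i, i + 1 < n → g (b i) ≤ g (b (i + 1)) := fun i hi ↦
    antitoneOn_of_le_add_mul_sub hf (hb _ hi) (hb i (by omega)) (hb_anti i hi)
  have hcross : ∑ i ∈ range n, g (b i) * (a i - b i) ≤ 0 :=
    sum_range_mul_nonpos_of_sum_range_nonneg hgb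
      (fun k hk ↦ by rw [sum_sub_distrib, sub_nonneg]; exact hprefix k hk)
      (by rw [sum_sub_distrib, htot, sub_self])
  calc ∑ i ∈ range n, f (a i) ≤ ∑ i ∈ range n, (f (b i) + g (b i) * (a i - b i)) :=
        sum_le_sum fun i hi ↦ hf _ (hb i (mem_range.1 hi)) _ (ha i (mem_range.1 hi))
    _ ≤ ∑ i ∈ range n, f (b i) := by rw [sum_add_distrib]; linarith

theorem Majorizes.sum_le_sum_of_le_add_mul_sub {n : ℕ} {x y : Fin n → ℝ} {D : Set ℝ}
    {f g : ℝ → ℝ} (hf : ∀ u ∈ D, ∀ v ∈ D, f v ≤ f u + g u * (v - u)) (hx : ∀ i, x i ∈ D)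
    (hy : ∀ i, y i ∈ D) (hxy : Majorizes x y) : ∑ i, f (x i) ≤ ∑ i, f (y i) := by
  rw [← sum_range_decreasingRearrangement x f, ← sum_range_decreasingRearrangement y f]
  refine sum_range_le_sum_range_of_le_add_mul_sub hf
    (fun i ↦ decreasingRearrangement_mem x hx) (fun i ↦ decreasingRearrangement_mem y hy)
    (fun i hi ↦ decreasingRearrangement_le_of_le y i.le_succ hi)
    (fun k ↦ hxy.sum_range_decreasingRearrangement_le) ?_
  have hsum := fun v : Fin n → ℝ ↦ sum_range_decreasingRearrangement v id
  simp only [id] at hsum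
  rw [hsum, hsum, hxy.2]

theorem ConcaveOn.le_add_mul_sub_of_hasDerivAt {S : Set ℝ} {f : ℝ → ℝ} {f' a b : ℝ}
    (hf : ConcaveOn ℝ S f) (ha : a ∈ S) (hb : b ∈ S) (hfa : HasDerivAt f f' a) :
    f b ≤ f a + f' * (b - a) := by
  rcases lt_trichotomy a b with hab | rfl | hab
  · have := hf.slope_le_of_hasDerivAt ha hb hab hfa
    rw [slope_def_field, div_le_iff₀ (sub_pos.2 hab)] at this
    linarith
  · simp
  · have := hf.le_slope_of_hasDerivAt hb ha hab hfa
    rw [slope_def_field, le_div_iff₀ (sub_pos.2 hab)] at this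
    linarith

noncomputable def poissonMass (μ : ℝ) (k : ℕ) : ℝ := exp (-μ) * μ ^ k / k !

noncomputable def poissonCDF (μ : ℝ) (r : ℕ) : ℝ := ∑ k ∈ range (r + 1), poissonMass μ k

theorem hasSum_poissonMass {μ : ℝ} (hμ : 0 ≤ μ) : HasSum (poissonMass μ) 1 := by
  have := hasSum_one_poissonMeasure μ.toNNReal
  rw [Real.coe_toNNReal _ hμ] at this
  exact this

theorem poissonMass_nonneg {μ : ℝ} (hμ : 0 ≤ μ) (k : ℕ) : 0 ≤ poissonMass μ k := by
  unfold poissonMass; positivity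

theorem poissonCDF_pos {μ : ℝ} (hμ : 0 ≤ μ) (r : ℕ) : 0 < poissonCDF μ r :=
  sum_pos' (fun k _ ↦ poissonMass_nonneg hμ k) ⟨0, by simp, by simp [poissonMass, exp_pos]⟩

theorem hasDerivAt_poissonMass_succ (μ : ℝ) (k : ℕ) :
    HasDerivAt (poissonMass · (k + 1)) (poissonMass μ k - poissonMass μ (k + 1)) μ := by
  refine ((((hasDerivAt_neg μ).exp).mul (hasDerivAt_pow (k + 1) μ)).div_const
    ((k + 1)! : ℝ)).congr_deriv ?_
  simp only [poissonMass, Nat.factorial_succ, Nat.cast_mul, Nat.add_sub_cancel]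
  field_simp
  push_cast
  ring

theorem hasDerivAt_poissonCDF (μ : ℝ) (r : ℕ) :
    HasDerivAt (poissonCDF · r) (-poissonMass μ r) μ := by
  induction r with
  | zero => simpa [poissonCDF, poissonMass] using (hasDerivAt_neg μ).exp
  | succ r ih =>
    have hsucc : (poissonCDF · (r + 1)) = fun t ↦ poissonCDF t r + poissonMass t (r + 1) :=
      funext fun t ↦ sum_range_succ _ _
    rw [hsucc]
    exact (ih.add (hasDerivAt_poissonMass_succ μ r)).congr_deriv (by ring)

theorem hasDerivAt_log_poissonCDF {μ : ℝ} (hμ : 0 ≤ μ) (r : ℕ) :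
    HasDerivAt (fun t ↦ log (poissonCDF t r)) (-poissonMass μ r / poissonCDF μ r) μ :=
  (hasDerivAt_poissonCDF μ r).log (poissonCDF_pos hμ r).ne'

theorem poissonMass_mul_poissonMass_le {a b : ℝ} (ha : 0 ≤ a) (hab : a ≤ b) {k r : ℕ}
    (hkr : k ≤ r) : poissonMass a r * poissonMass b k ≤ poissonMass b r * poissonMass a k := by
  obtain ⟨m, rfl⟩ := Nat.exists_eq_add_of_le hkr
  have hb : 0 ≤ b := ha.trans hab
  calc poissonMass a (k + m) * poissonMass b k
      = exp (-a) * exp (-b) * (a * b) ^ k / ((k + m)! * k ! : ℝ) * a ^ m := by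
        simp only [poissonMass]; ring
    _ ≤ exp (-a) * exp (-b) * (a * b) ^ k / ((k + m)! * k ! : ℝ) * b ^ m := by gcongr
    _ = poissonMass b (k + m) * poissonMass a k := by simp only [poissonMass]; ring

theorem poissonMass_div_poissonCDF_le {a b : ℝ} (ha : 0 ≤ a) (hab : a ≤ b) (r : ℕ) :
    poissonMass a r / poissonCDF a r ≤ poissonMass b r / poissonCDF b r := by
  rw [div_le_div_iff₀ (poissonCDF_pos ha r) (poissonCDF_pos (ha.trans hab) r), poissonCDF,
    poissonCDF, mul_sum, mul_sum]
  exact sum_le_sum fun k hk ↦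
    poissonMass_mul_poissonMass_le ha hab (Nat.lt_succ_iff.1 (mem_range.1 hk))

theorem concaveOn_log_poissonCDF (r : ℕ) :
    ConcaveOn ℝ (Set.Ici 0) (fun μ ↦ log (poissonCDF μ r)) := by
  refine AntitoneOn.concaveOn_of_deriv (convex_Ici 0)
    (fun μ hμ ↦ (hasDerivAt_log_poissonCDF hμ r).continuousAt.continuousWithinAt)
    (fun μ hμ ↦ (hasDerivAt_log_poissonCDF (interior_subset hμ) r).differentiableAt
      |>.differentiableWithinAt) ?_
  rw [interior_Ici]
  intro a ha b hb hab
  rw [(hasDerivAt_log_poissonCDF (le_of_lt ha) r).deriv,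
    (hasDerivAt_log_poissonCDF (le_of_lt hb) r).deriv, neg_div, neg_div, neg_le_neg_iff]
  exact poissonMass_div_poissonCDF_le (le_of_lt ha) hab r

theorem prod_poissonCDF_le_of_majorizes {n : ℕ} {x y : Fin n → ℝ} (hx : ∀ i, 0 ≤ x i)
    (hy : ∀ i, 0 ≤ y i) (hxy : Majorizes x y) (r : ℕ) :
    ∏ i, poissonCDF (x i) r ≤ ∏ i, poissonCDF (y i) r := by
  have hlog : ∑ i, log (poissonCDF (x i) r) ≤ ∑ i, log (poissonCDF (y i) r) :=
    hxy.sum_le_sum_of_le_add_mul_sub (f := fun μ ↦ log (poissonCDF μ r)) (fun u hu v hv ↦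
      (concaveOn_log_poissonCDF r).le_add_mul_sub_of_hasDerivAt hu hv
        (hasDerivAt_log_poissonCDF hu r)) hx hy
  have hpos : ∀ z : Fin n → ℝ, (∀ i, 0 ≤ z i) → ∀ i ∈ univ, poissonCDF (z i) r ≠ 0 :=
    fun z hz i _ ↦ (poissonCDF_pos (hz i) r).ne'
  rwa [← log_prod (hpos x hx), ← log_prod (hpos y hy),
    log_le_log_iff (prod_pos fun i _ ↦ poissonCDF_pos (hx i) r)
      (prod_pos fun i _ ↦ poissonCDF_pos (hy i) r)] at hlog

-- `Z` need not be measurable: `{Z ∈ s}` and its complement are bounded by subadditivity,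
-- and the two bounds add up to `1`.
theorem measure_mem_finset_eq_sum {Ω ι : Type*} [MeasurableSpace Ω] [Countable ι]
    {P : Measure Ω} [IsProbabilityMeasure P] {Z : Ω → ι}
    (hZ : ∑' k, P {ω | Z ω = k} = 1) (s : Finset ι) :
    P {ω | Z ω ∈ s} = ∑ k ∈ s, P {ω | Z ω = k} := by
  have hin : P {ω | Z ω ∈ s} ≤ ∑ k ∈ s, P {ω | Z ω = k} :=
    calc P {ω | Z ω ∈ s} = P (⋃ k ∈ s, {ω | Z ω = k}) := by congr 1; ext; simp
      _ ≤ _ := measure_biUnion_finset_le _ _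
  have hout : P {ω | Z ω ∉ s} ≤ ∑' k : ↥(s : Set ι)ᶜ, P {ω | Z ω = k} :=
    calc P {ω | Z ω ∉ s} = P (⋃ k : ↥(s : Set ι)ᶜ, {ω | Z ω = k}) := by congr 1; ext; simp
      _ ≤ _ := measure_iUnion_le _
  have hcover : 1 ≤ P {ω | Z ω ∈ s} + P {ω | Z ω ∉ s} :=
    calc 1 = P Set.univ := measure_univ.symm
      _ ≤ P ({ω | Z ω ∈ s} ∪ {ω | Z ω ∉ s}) := measure_mono fun ω _ ↦ em _
      _ ≤ _ := measure_union_le _ _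
  have hsplit := ENNReal.sum_add_tsum_compl s fun k ↦ P {ω | Z ω = k}
  rw [hZ] at hsplit
  have hfin : ∑' k : ↥(s : Set ι)ᶜ, P {ω | Z ω = k} ≠ ⊤ :=
    ne_top_of_le_ne_top ENNReal.one_ne_top (hsplit ▸ le_add_self)
  refine le_antisymm hin ((ENNReal.add_le_add_iff_right hfin).1 ?_)
  rw [hsplit]
  exact hcover.trans (add_le_add_right hout _)

theorem measure_le_eq_ofReal_poissonCDF {Ω : Type*} [MeasurableSpace Ω] {P : Measure Ω}
    [IsProbabilityMeasure P] {Z : Ω → ℕ} {μ : ℝ} (hμ : 0 ≤ μ)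
    (hZ : ∀ k, P {ω | Z ω = k} = ENNReal.ofReal (poissonMass μ k)) (r : ℕ) :
    P {ω | Z ω ≤ r} = ENNReal.ofReal (poissonCDF μ r) := by
  have htot : ∑' k, P {ω | Z ω = k} = 1 := by
    simp_rw [hZ]
    rw [← ENNReal.ofReal_tsum_of_nonneg (poissonMass_nonneg hμ) (hasSum_poissonMass hμ).summable,
      (hasSum_poissonMass hμ).tsum_eq, ENNReal.ofReal_one]
  have hset : {ω | Z ω ≤ r} = {ω | Z ω ∈ range (r + 1)} := by
    ext; simp
  rw [hset, measure_mem_finset_eq_sum htot, poissonCDF,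
    ENNReal.ofReal_sum_of_nonneg fun k _ ↦ poissonMass_nonneg hμ k]
  exact sum_congr rfl fun k _ ↦ hZ k

theorem measure_forall_le_eq_ofReal_prod_poissonCDF {Ω : Type*} [MeasurableSpace Ω]
    {P : Measure Ω} [IsProbabilityMeasure P] {n : ℕ} {Z : Fin n → Ω → ℕ} {μ : Fin n → ℝ}
    (hμ : ∀ i, 0 ≤ μ i) (hind : iIndepFun Z P)
    (hZ : ∀ i k, P {ω | Z i ω = k} = ENNReal.ofReal (poissonMass (μ i) k)) (r : ℕ) :
    P {ω | ∀ i, Z i ω ≤ r} = ENNReal.ofReal (∏ i, poissonCDF (μ i) r) := by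
  have hset : {ω | ∀ i, Z i ω ≤ r} = ⋂ i, Z i ⁻¹' Set.Iic r := by ext; simp
  rw [hset, hind.meas_iInter fun i ↦ ⟨Set.Iic r, trivial, rfl⟩,
    ENNReal.ofReal_prod_of_nonneg fun i _ ↦ (poissonCDF_pos (hμ i) r).le]
  exact prod_congr rfl fun i _ ↦ measure_le_eq_ofReal_poissonCDF (hμ i) (hZ i) r

theorem poisson_max_stochastic_order {Ω : Type*} [MeasurableSpace Ω]
    (P : Measure Ω) [IsProbabilityMeasure P] (n : ℕ)
    (X Y : Fin n → Ω → ℕ) (μ μ' : Fin n → ℝ)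
    (hμ : ∀ i, 0 < μ i) (hμ' : ∀ i, 0 < μ' i)
    (hXind : iIndepFun X P)
    (hYind : iIndepFun Y P)
    (hX : ∀ i k, P {ω | X i ω = k} =
      ENNReal.ofReal (Real.exp (-μ i) * μ i ^ k / (k.factorial : ℝ)))
    (hY : ∀ i k, P {ω | Y i ω = k} =
      ENNReal.ofReal (Real.exp (-μ' i) * μ' i ^ k / (k.factorial : ℝ)))
    (hmaj : Majorizes μ μ') (r : ℕ) :
    P {ω | ∀ i, X i ω ≤ r} ≤ P {ω | ∀ i, Y i ω ≤ r} := by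
  have hμ₀ : ∀ i, 0 ≤ μ i := fun i ↦ (hμ i).le
  have hμ'₀ : ∀ i, 0 ≤ μ' i := fun i ↦ (hμ' i).le
  rw [measure_forall_le_eq_ofReal_prod_poissonCDF hμ₀ hXind hX,
    measure_forall_le_eq_ofReal_prod_poissonCDF hμ'₀ hYind hY]
  exact ENNReal.ofReal_le_ofReal (prod_poissonCDF_le_of_majorizes hμ₀ hμ'₀ hmaj r)
end

section
/- For each fixed nonnegative integer r, the function Ψ₁(μ₁, ..., μₙ) = ∏_{k=1}^n (1/r!) ∫_0^{μ_k} e^{-t} t^r dt is Schur-concave on (0, ∞)^n. -/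
open MeasureTheory

/-!
The integral `γ(μ) = ∫₀^μ e^{-t} t^r dt` is log-concave on `(0, ∞)`. Indeed its logarithmic
derivative `e^{-μ} μ^r / γ(μ)` is antitone, which comes down to `(r - μ) γ(μ) ≤ e^{-μ} μ^{r+1}`:
both sides vanish at `0`, and the derivative of their difference is `e^{-μ} μ^r + γ(μ) ≥ 0`.
Hence `∏ₖ γ(μₖ) = exp (∑ₖ log γ(μₖ))` is Schur-concave by Karamata's inequality for the concave
function `log γ`. Karamata's inequality follows from the tangent-line bound
`g(x₍ᵢ₎) ≤ g(y₍ᵢ₎) + g'(y₍ᵢ₎) (x₍ᵢ₎ - y₍ᵢ₎)` on the increasingly sorted vectors and a summation by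
parts: the weights `g'(y₍ᵢ₎)` decrease and the partial sums of the `x₍ᵢ₎ - y₍ᵢ₎` are nonpositive.
-/

namespace Finset

variable {ι : Type*}

theorem sum_le_sum_of_card_eq_of_forall_le [DecidableEq ι] {s t : Finset ι} {w : ι → ℝ}
    (hcard : #s = #t) (h : ∀ i ∈ s \ t, ∀ j ∈ t \ s, w i ≤ w j) :
    ∑ i ∈ s, w i ≤ ∑ i ∈ t, w i := by
  rw [← sub_nonneg, ← sum_sdiff_sub_sum_sdiff, sub_nonneg]
  rcases (t \ s).eq_empty_or_nonempty with hts | hts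
  · have hst : s \ t = ∅ := card_eq_zero.mp (by rw [card_sdiff_comm hcard, hts, card_empty])
    simp [hts, hst]
  · obtain ⟨j₀, hj₀, hmin⟩ := exists_min_image _ w hts
    calc ∑ i ∈ s \ t, w i ≤ #(s \ t) • w j₀ := sum_le_card_nsmul _ _ _ fun i hi ↦ h i hi j₀ hj₀
      _ = #(t \ s) • w j₀ := by rw [card_sdiff_comm hcard]
      _ ≤ ∑ j ∈ t \ s, w j := card_nsmul_le_sum _ _ _ hmin

theorem sum_mul_le_mul_sum_of_antitoneOn [LinearOrder ι] {s : Finset ι} {d z : ι → ℝ}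
    (hd : AntitoneOn d s) (hz : ∀ a ∈ s, ∑ i ∈ s with i ≤ a, z i ≤ 0) {c : ℝ}
    (hc : ∀ i ∈ s, c ≤ d i) : ∑ i ∈ s, d i * z i ≤ c * ∑ i ∈ s, z i := by
  classical
  induction s using Finset.induction_on_max generalizing c with
  | empty => simp
  | insert a s hlt ih =>
    have has : a ∉ s := fun h ↦ (hlt a h).false
    have hprefix : ∀ b ∈ s, ∑ i ∈ s with i ≤ b, z i ≤ 0 := fun b hb ↦ by
      simpa [filter_insert, not_le.mpr (hlt b hb)] using hz b (mem_insert_of_mem hb)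
    have htotal : ∑ i ∈ insert a s, z i ≤ 0 := by
      have hall : ∀ i ∈ insert a s, i ≤ a := by simpa using fun i hi ↦ (hlt i hi).le
      simpa [filter_true_of_mem hall] using hz a (mem_insert_self a s)
    have hs := ih (hd.mono (subset_insert a s)) hprefix (c := d a) fun i hi ↦
      hd (mem_insert_of_mem hi) (mem_insert_self a s) (hlt i hi).le
    rw [sum_insert has] at htotal
    calc ∑ i ∈ insert a s, d i * z i ≤ d a * z a + d a * ∑ i ∈ s, z i := by
          rw [sum_insert has]; linarith
      _ = d a * (z a + ∑ i ∈ s, z i) := by ring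
      _ ≤ c * ∑ i ∈ insert a s, z i := by
          rw [sum_insert has]
          exact mul_le_mul_of_nonpos_right (hc a (mem_insert_self a s)) htotal

end Finset

theorem ConcaveOn.le_add_deriv_mul_sub {s : Set ℝ} {g : ℝ → ℝ} (hg : ConcaveOn ℝ s g) {u v : ℝ}
    (hu : u ∈ s) (hv : v ∈ s) (hgv : DifferentiableAt ℝ g v) :
    g u ≤ g v + deriv g v * (u - v) := by
  rcases lt_trichotomy u v with huv | rfl | hvu
  · have := hg.deriv_le_slope hu hv huv hgv
    rw [slope_def_field, le_div_iff₀ (sub_pos.mpr huv)] at this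
    linarith
  · simp
  · have := hg.slope_le_deriv hv hu hvu hgv
    rw [slope_def_field, div_le_iff₀ (sub_pos.mpr hvu)] at this
    linarith

namespace Majorizes

open Finset

variable {n : ℕ} {x y : Fin n → ℝ}

theorem sum_sort_le_sum_sort (h : Majorizes x y) (k : Fin n) :
    ∑ i with i ≤ k, x (Tuple.sort x i) ≤ ∑ i with i ≤ k, y (Tuple.sort y i) := by
  set σ := Tuple.sort x
  set τ := Tuple.sort y
  set B : Finset (Fin n) := {i | i ≤ k}
  -- The top `n - #B` entries of `y` are dominated by the entries of `x` on some `t`; the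
  -- complement of `t` has `#B` elements, so it carries at least the bottom block of `x`.
  obtain ⟨t, htcard, hle⟩ := h.1 (Bᶜ.map τ.toEmbedding)
  have hy : ∑ i ∈ B, y (τ i) + ∑ j ∈ Bᶜ.map τ.toEmbedding, y j = ∑ j, y j := by
    rw [sum_map, Equiv.coe_toEmbedding, sum_add_sum_compl B fun i ↦ y (τ i), Equiv.sum_comp τ y]
  have hx : ∑ j ∈ tᶜ.map σ.symm.toEmbedding, x (σ j) + ∑ j ∈ t, x j = ∑ j, x j := by
    simp [sum_map, add_comm, sum_add_sum_compl]
  have hbottom : ∑ i ∈ B, x (σ i) ≤ ∑ j ∈ tᶜ.map σ.symm.toEmbedding, x (σ j) := by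
    refine sum_le_sum_of_card_eq_of_forall_le ?_ fun i hi j hj ↦ Tuple.monotone_sort x ?_
    · have hB := card_le_univ B
      rw [Fintype.card_fin] at hB
      rw [card_map, card_compl, htcard, card_map, card_compl, Fintype.card_fin]
      omega
    · simp only [B, mem_sdiff, mem_filter_univ, mem_map_equiv, Equiv.symm_symm, mem_compl,
        not_le] at hi hj
      exact hi.1.trans hj.2.le
  linarith [h.2]

theorem sum_le_sum_of_concaveOn (hmaj : Majorizes x y) {s : Set ℝ} {g : ℝ → ℝ}
    (hg : ConcaveOn ℝ s g) (hgd : ∀ u ∈ s, DifferentiableAt ℝ g u)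
    (hx : ∀ i, x i ∈ s) (hy : ∀ i, y i ∈ s) :
    ∑ i, g (x i) ≤ ∑ i, g (y i) := by
  set σ := Tuple.sort x
  set τ := Tuple.sort y
  have hsum : ∑ i, (x (σ i) - y (τ i)) = 0 := by
    rw [sum_sub_distrib, sub_eq_zero, Equiv.sum_comp σ x, Equiv.sum_comp τ y, hmaj.2]
  obtain ⟨c, hc⟩ := (Set.finite_range fun i ↦ deriv g (y (τ i))).bddBelow
  have habel : ∑ i, deriv g (y (τ i)) * (x (σ i) - y (τ i)) ≤ 0 := by
    refine (sum_mul_le_mul_sum_of_antitoneOn ?_ ?_ fun i _ ↦ hc ⟨i, rfl⟩).trans_eq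
      (by rw [hsum, mul_zero])
    · exact fun i _ j _ hij ↦ hg.antitoneOn_deriv hgd (hy _) (hy _) (Tuple.monotone_sort y hij)
    · exact fun k _ ↦ by simpa [sum_sub_distrib] using hmaj.sum_sort_le_sum_sort k
  calc ∑ i, g (x i) = ∑ i, g (x (σ i)) := (Equiv.sum_comp σ (g ∘ x)).symm
    _ ≤ ∑ i, (g (y (τ i)) + deriv g (y (τ i)) * (x (σ i) - y (τ i))) :=
        sum_le_sum fun i _ ↦ hg.le_add_deriv_mul_sub (hx _) (hy _) (hgd _ (hy _))
    _ ≤ ∑ i, g (y (τ i)) := by rw [sum_add_distrib]; linarith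
    _ = ∑ i, g (y i) := Equiv.sum_comp τ (g ∘ y)

theorem prod_le_prod_of_concaveOn_log (hmaj : Majorizes x y) {s : Set ℝ} {f : ℝ → ℝ}
    (hpos : ∀ u ∈ s, 0 < f u) (hf : ConcaveOn ℝ s (Real.log ∘ f))
    (hfd : ∀ u ∈ s, DifferentiableAt ℝ f u) (hx : ∀ i, x i ∈ s) (hy : ∀ i, y i ∈ s) :
    ∏ i, f (x i) ≤ ∏ i, f (y i) := by
  have hexp : ∀ z : Fin n → ℝ, (∀ i, z i ∈ s) →
      ∏ i, f (z i) = Real.exp (∑ i, Real.log (f (z i))) := fun z hz ↦ by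
    rw [Real.exp_sum]
    exact prod_congr rfl fun i _ ↦ (Real.exp_log (hpos _ (hz i))).symm
  rw [hexp x hx, hexp y hy, Real.exp_le_exp]
  exact hmaj.sum_le_sum_of_concaveOn hf (fun u hu ↦ (hfd u hu).log (hpos u hu).ne') hx hy

end Majorizes

/-- The lower incomplete gamma function `γ(r + 1, μ)`; for `μ > 0` it equals `r !` times the
probability that a Poisson(`μ`) variable exceeds `r`. -/
noncomputable def lowerIncompleteGamma (r : ℕ) (μ : ℝ) : ℝ :=
  ∫ t in (0 : ℝ)..μ, Real.exp (-t) * t ^ r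

theorem hasDerivAt_lowerIncompleteGamma (r : ℕ) (μ : ℝ) :
    HasDerivAt (lowerIncompleteGamma r) (Real.exp (-μ) * μ ^ r) μ := by
  have hcont : Continuous fun t : ℝ ↦ Real.exp (-t) * t ^ r := by fun_prop
  exact intervalIntegral.integral_hasDerivAt_right (hcont.intervalIntegrable _ _)
    (hcont.stronglyMeasurableAtFilter _ _) hcont.continuousAt

theorem lowerIncompleteGamma_pos (r : ℕ) {μ : ℝ} (hμ : 0 < μ) : 0 < lowerIncompleteGamma r μ :=
  intervalIntegral.intervalIntegral_pos_of_pos_on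
    ((by fun_prop : Continuous fun t : ℝ ↦ Real.exp (-t) * t ^ r).intervalIntegrable _ _)
    (fun t ht ↦ by have := ht.1; positivity) hμ

theorem sub_mul_lowerIncompleteGamma_le (r : ℕ) {μ : ℝ} (hμ : 0 ≤ μ) :
    (r - μ) * lowerIncompleteGamma r μ ≤ Real.exp (-μ) * μ ^ (r + 1) := by
  set G : ℝ → ℝ := fun ν ↦ Real.exp (-ν) * ν ^ (r + 1) - (r - ν) * lowerIncompleteGamma r ν
  have hG : ∀ ν, HasDerivAt G (Real.exp (-ν) * ν ^ r + lowerIncompleteGamma r ν) ν := by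
    intro ν
    refine (((hasDerivAt_neg ν).exp.mul (hasDerivAt_pow (r + 1) ν)).sub
      (((hasDerivAt_id ν).const_sub (r : ℝ)).mul
        (hasDerivAt_lowerIncompleteGamma r ν))).congr_deriv ?_
    simp only [Nat.cast_add, Nat.cast_one, add_tsub_cancel_right, id, pow_succ]
    ring
  have hmono : MonotoneOn G (Set.Ici 0) :=
    monotoneOn_of_hasDerivWithinAt_nonneg (convex_Ici 0)
      (fun ν _ ↦ (hG ν).continuousAt.continuousWithinAt) (fun ν _ ↦ (hG ν).hasDerivWithinAt)
      fun ν hν ↦ by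
        rw [interior_Ici, Set.mem_Ioi] at hν
        have := lowerIncompleteGamma_pos r hν
        positivity
  have hG0 : G 0 = 0 := by simp [G, lowerIncompleteGamma]
  have := hmono Set.self_mem_Ici hμ hμ
  rw [hG0] at this
  exact sub_nonneg.mp this

theorem antitoneOn_logDeriv_lowerIncompleteGamma (r : ℕ) :
    AntitoneOn (logDeriv (lowerIncompleteGamma r)) (Set.Ioi 0) := by
  have hlogDeriv : logDeriv (lowerIncompleteGamma r) =
      fun μ ↦ Real.exp (-μ) * μ ^ r / lowerIncompleteGamma r μ := funext fun μ ↦ by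
    rw [logDeriv_apply, (hasDerivAt_lowerIncompleteGamma r μ).deriv]
  have hderiv : ∀ μ ∈ Set.Ioi (0 : ℝ), HasDerivAt (logDeriv (lowerIncompleteGamma r))
      (((Real.exp (-μ) * -1 * μ ^ r + Real.exp (-μ) * (r * μ ^ (r - 1))) * lowerIncompleteGamma r μ
        - Real.exp (-μ) * μ ^ r * (Real.exp (-μ) * μ ^ r)) / lowerIncompleteGamma r μ ^ 2) μ :=
    fun μ hμ ↦ hlogDeriv ▸ ((hasDerivAt_neg μ).exp.mul (hasDerivAt_pow r μ)).div
      (hasDerivAt_lowerIncompleteGamma r μ) (lowerIncompleteGamma_pos r hμ).ne'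
  refine antitoneOn_of_hasDerivWithinAt_nonpos (convex_Ioi 0)
    (fun μ hμ ↦ (hderiv μ hμ).continuousAt.continuousWithinAt)
    (by simpa only [interior_Ioi] using fun μ hμ ↦ (hderiv μ hμ).hasDerivWithinAt) ?_
  rw [interior_Ioi]
  intro μ (hμ : 0 < μ)
  refine div_nonpos_of_nonpos_of_nonneg (nonpos_of_mul_nonpos_left ?_ hμ) (sq_nonneg _)
  have hpow : (r : ℝ) * μ ^ (r - 1) * μ = r * μ ^ r := by
    cases r with
    | zero => simp
    | succ r => rw [add_tsub_cancel_right, pow_succ, mul_assoc]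
  calc _ = Real.exp (-μ) * μ ^ r *
        ((r - μ) * lowerIncompleteGamma r μ - Real.exp (-μ) * μ ^ (r + 1)) := by
          linear_combination Real.exp (-μ) * lowerIncompleteGamma r μ * hpow
    _ ≤ 0 := mul_nonpos_of_nonneg_of_nonpos (by positivity)
          (sub_nonpos.mpr (sub_mul_lowerIncompleteGamma_le r hμ.le))

theorem concaveOn_log_lowerIncompleteGamma (r : ℕ) :
    ConcaveOn ℝ (Set.Ioi 0) (Real.log ∘ lowerIncompleteGamma r) := by
  have hd : ∀ μ ∈ Set.Ioi (0 : ℝ), HasDerivAt (Real.log ∘ lowerIncompleteGamma r)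
      (logDeriv (lowerIncompleteGamma r) μ) μ := fun μ hμ ↦ by
    rw [logDeriv_apply, (hasDerivAt_lowerIncompleteGamma r μ).deriv]
    exact (hasDerivAt_lowerIncompleteGamma r μ).log (lowerIncompleteGamma_pos r hμ).ne'
  refine AntitoneOn.concaveOn_of_deriv (convex_Ioi 0)
    (fun μ hμ ↦ (hd μ hμ).continuousAt.continuousWithinAt) ?_ ?_ <;> rw [interior_Ioi]
  · exact fun μ hμ ↦ (hd μ hμ).differentiableAt.differentiableWithinAt
  · exact (antitoneOn_logDeriv_lowerIncompleteGamma r).congr fun μ hμ ↦ (hd μ hμ).deriv.symm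

theorem poisson_min_survival_schur_concave (n r : ℕ) (x y : Fin n → ℝ)
    (hx : ∀ i, 0 < x i) (hy : ∀ i, 0 < y i) (hmaj : Majorizes x y) :
    ∏ k, ((1 / (r.factorial : ℝ)) * ∫ t in (0 : ℝ)..(x k), Real.exp (-t) * t ^ r)
      ≤ ∏ k, ((1 / (r.factorial : ℝ)) * ∫ t in (0 : ℝ)..(y k), Real.exp (-t) * t ^ r) := by
  rw [Finset.prod_mul_distrib, Finset.prod_mul_distrib]
  exact mul_le_mul_of_nonneg_left
    (hmaj.prod_le_prod_of_concaveOn_log (fun μ hμ ↦ lowerIncompleteGamma_pos r hμ)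
      (concaveOn_log_lowerIncompleteGamma r)
      (fun μ _ ↦ (hasDerivAt_lowerIncompleteGamma r μ).differentiableAt) hx hy)
    (by positivity)
end

section
/- Let X₁, ..., Xₙ be independent Poisson random variables with parameters μ₁, ..., μₙ, and Y₁, ..., Yₙ independent Poisson with parameters μ₁*, ..., μₙ*, all positive. If (μ₁, ..., μₙ) majorizes (μ₁*, ..., μₙ*), then min(X₁,...,Xₙ) ≤_st min(Y₁,...,Yₙ), i.e., for every nonnegative integer r, P(min Xᵢ > r) ≤ P(min Yᵢ > r). -/
/-!
Let `F_r(m) = 1 - e^{-m} ∑_{k ≤ r} m^k / k!` be the probability that a Poisson(`m`) variable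
exceeds `r`. By independence `P(min Xᵢ > r) = ∏ F_r(μᵢ)`, so the claim is
`∑ log F_r(μᵢ) ≤ ∑ log F_r(μᵢ*)`: Karamata's inequality for `log F_r`, once this is concave on
`(0, ∞)`. Since `F_r' (m) = e^{-m} m^r / r!` and `F_r(m) = e^{-m} ∑_j m^(j+r+1) / (j+r+1)!`, the
inequality `F_r'(y) F_r(x) ≤ F_r'(x) F_r(y)` for `0 < x ≤ y` holds term by term, because
`y^r x^(j+r+1) ≤ x^r y^(j+r+1)`; hence `(log F_r)' = F_r' / F_r` decreases.

Karamata's inequality is proved by sorting both vectors decreasingly, bounding each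
`f(xᵢ) - f(yᵢ)` by the tangent line of `f` at `yᵢ`, and summing by parts.
-/

open MeasureTheory ProbabilityTheory

open Finset Real
open scoped Nat ENNReal

theorem sum_range_mul_nonpos_of_monotoneOn {R : Type*} [CommRing R] [LinearOrder R]
    [IsStrictOrderedRing R] {c d : ℕ → R} {n : ℕ}
    (hc : MonotoneOn c (Set.Iio n)) (hd : ∀ k < n, 0 ≤ ∑ i ∈ range k, d i)
    (hd_sum : ∑ i ∈ range n, d i = 0) : ∑ i ∈ range n, c i * d i ≤ 0 := by
  have h := sum_range_by_parts c d n
  simp only [smul_eq_mul] at h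
  rw [h, hd_sum, mul_zero, zero_sub, neg_nonpos]
  refine sum_nonneg fun i hi => ?_
  have hi : i + 1 < n := by have := mem_range.1 hi; omega
  exact mul_nonneg (sub_nonneg.2 (hc (by simp; omega) (by simpa using hi) (by omega))) (hd _ hi)

theorem ConcaveOn.le_add_deriv_mul_sub_s9 {S : Set ℝ} {f : ℝ → ℝ} (hf : ConcaveOn ℝ S f)
    {x y : ℝ} (hx : x ∈ S) (hy : y ∈ S) (hfy : DifferentiableAt ℝ f y) :
    f x ≤ f y + deriv f y * (x - y) := by
  rcases lt_trichotomy x y with hxy | rfl | hxy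
  · have := hf.deriv_le_slope hx hy hxy hfy
    rw [slope_def_field, le_div_iff₀ (sub_pos.2 hxy)] at this
    linarith
  · simp
  · have := hf.slope_le_deriv hy hx hxy hfy
    rw [slope_def_field, div_le_iff₀ (sub_pos.2 hxy)] at this
    linarith

theorem ConcaveOn.sum_range_le_of_partialSums_le {S : Set ℝ} {f : ℝ → ℝ}
    (hf : ConcaveOn ℝ S f) (hfd : ∀ z ∈ S, DifferentiableAt ℝ f z) {a b : ℕ → ℝ} {n : ℕ}
    (ha : ∀ i < n, a i ∈ S) (hb : ∀ i < n, b i ∈ S) (hb_anti : AntitoneOn b (Set.Iio n))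
    (hpartial : ∀ k < n, ∑ i ∈ range k, b i ≤ ∑ i ∈ range k, a i)
    (hsum : ∑ i ∈ range n, a i = ∑ i ∈ range n, b i) :
    ∑ i ∈ range n, f (a i) ≤ ∑ i ∈ range n, f (b i) := by
  have hslope : MonotoneOn (fun i => deriv f (b i)) (Set.Iio n) := fun i hi j hj hij =>
    hf.antitoneOn_deriv hfd (hb j hj) (hb i hi) (hb_anti hi hj hij)
  have habel := sum_range_mul_nonpos_of_monotoneOn hslope (d := fun i => a i - b i)
    (fun k hk => by simpa [sum_sub_distrib] using hpartial k hk) (by simp [sum_sub_distrib, hsum])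
  calc ∑ i ∈ range n, f (a i)
      ≤ ∑ i ∈ range n, (f (b i) + deriv f (b i) * (a i - b i)) :=
        sum_le_sum fun i hi => hf.le_add_deriv_mul_sub_s9 (ha i (mem_range.1 hi))
          (hb i (mem_range.1 hi)) (hfd _ (hb i (mem_range.1 hi)))
    _ ≤ ∑ i ∈ range n, f (b i) := by rw [sum_add_distrib]; linarith

theorem exists_perm_antitone {α : Type*} [LinearOrder α] {n : ℕ} (v : Fin n → α) :
    ∃ σ : Equiv.Perm (Fin n), Antitone (v ∘ σ) :=
  ⟨_, Tuple.monotone_sort (OrderDual.toDual ∘ v)⟩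

theorem Fin.val_le_of_strictMono {k n : ℕ} {e : Fin k → Fin n} (he : StrictMono e) (j : Fin k) :
    (j : ℕ) ≤ e j := by
  simpa using card_le_card_of_injOn e (s := Iic j) (t := Iic (e j))
    (fun i hi => by simpa using he.monotone (by simpa using hi)) he.injective.injOn

theorem Fin.sum_range_extend_val {M : Type*} [AddCommMonoid M] {n k : ℕ} (v : Fin n → M)
    (hk : k ≤ n) :
    ∑ j ∈ range k, Function.extend Fin.val v 0 j = ∑ i : Fin k, v (Fin.castLE hk i) := by
  rw [← Fin.sum_univ_eq_sum_range]
  exact sum_congr rfl fun i _ => Fin.val_injective.extend_apply v 0 (Fin.castLE hk i)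

theorem Fin.sum_range_comp_extend_val_perm {α M : Type*} [Zero α] [AddCommMonoid M] {n : ℕ}
    (v : Fin n → α) (σ : Equiv.Perm (Fin n)) (f : α → M) :
    ∑ i ∈ range n, f (Function.extend Fin.val (v ∘ σ) 0 i) = ∑ i, f (v i) := by
  rw [← Fin.sum_univ_eq_sum_range (fun i => f (Function.extend Fin.val (v ∘ σ) 0 i))]
  simp_rw [Fin.val_injective.extend_apply]
  exact Equiv.sum_comp σ (f ∘ v)

theorem Antitone.sum_le_sum_range_extend {M : Type*} [AddCommMonoid M] [PartialOrder M]
    [IsOrderedAddMonoid M] {n : ℕ} {v : Fin n → M} (hv : Antitone v) (t : Finset (Fin n)) :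
    ∑ i ∈ t, v i ≤ ∑ j ∈ range #t, Function.extend Fin.val v 0 j := by
  have hk : #t ≤ n := by simpa using t.card_le_univ
  let e := t.orderIsoOfFin rfl
  rw [Fin.sum_range_extend_val v hk, ← t.sum_coe_sort, ← Equiv.sum_comp e.toEquiv]
  exact sum_le_sum fun j _ => hv (Fin.val_le_of_strictMono
    (Subtype.strictMono_coe _ |>.comp e.strictMono) j)

theorem Majorizes.sum_le_sum_of_concaveOn_s9 {n : ℕ} {x y : Fin n → ℝ} (hxy : Majorizes x y)
    {S : Set ℝ} {f : ℝ → ℝ} (hf : ConcaveOn ℝ S f) (hfd : ∀ z ∈ S, DifferentiableAt ℝ f z)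
    (hx : ∀ i, x i ∈ S) (hy : ∀ i, y i ∈ S) : ∑ i, f (x i) ≤ ∑ i, f (y i) := by
  obtain ⟨σ, hσ⟩ := exists_perm_antitone x
  obtain ⟨τ, hτ⟩ := exists_perm_antitone y
  set a := Function.extend Fin.val (x ∘ σ) 0
  set b := Function.extend Fin.val (y ∘ τ) 0
  have ha : ∀ i (hi : i < n), a i = x (σ ⟨i, hi⟩) := fun i hi =>
    Fin.val_injective.extend_apply _ _ ⟨i, hi⟩
  have hb : ∀ i (hi : i < n), b i = y (τ ⟨i, hi⟩) := fun i hi =>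
    Fin.val_injective.extend_apply _ _ ⟨i, hi⟩
  have hsum_a (g : ℝ → ℝ) := Fin.sum_range_comp_extend_val_perm x σ g
  have hsum_b (g : ℝ → ℝ) := Fin.sum_range_comp_extend_val_perm y τ g
  have hpartial (k : ℕ) (hk : k < n) : ∑ i ∈ range k, b i ≤ ∑ i ∈ range k, a i := by
    obtain ⟨t, ht, hle⟩ := hxy.1 (univ.map ((Fin.castLEEmb hk.le).trans τ.toEmbedding))
    calc ∑ i ∈ range k, b i
        = ∑ i ∈ univ.map ((Fin.castLEEmb hk.le).trans τ.toEmbedding), y i := by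
          rw [Fin.sum_range_extend_val _ hk.le, sum_map]; rfl
      _ ≤ ∑ i ∈ t, x i := hle
      _ = ∑ i ∈ t.map σ.symm.toEmbedding, x (σ i) := by simp [sum_map]
      _ ≤ ∑ i ∈ range k, a i := by
          simpa [ht] using hσ.sum_le_sum_range_extend (t.map σ.symm.toEmbedding)
  have := hf.sum_range_le_of_partialSums_le hfd (fun i hi => ha i hi ▸ hx _)
    (fun i hi => hb i hi ▸ hy _)
    (fun i hi j hj hij => by rw [hb i hi, hb j hj]; exact hτ (Fin.mk_le_mk.2 hij)) hpartial
    (by simpa only [id] using (hsum_a id).trans (hxy.2.trans (hsum_b id).symm))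
  rwa [hsum_a, hsum_b] at this

noncomputable def poissonSurvival (r : ℕ) (x : ℝ) : ℝ :=
  1 - ∑ k ∈ range (r + 1), exp (-x) * x ^ k / k !

theorem hasSum_poisson (x : ℝ) : HasSum (fun k : ℕ => exp (-x) * x ^ k / k !) 1 := by
  have h := (NormedSpace.expSeries_div_hasSum_exp x).mul_left (exp (-x))
  rw [← exp_eq_exp_ℝ, ← exp_add, neg_add_cancel, exp_zero] at h
  simpa only [mul_div_assoc] using h

theorem poissonSurvival_eq_tsum (r : ℕ) (x : ℝ) :
    poissonSurvival r x = ∑' j, exp (-x) * x ^ (j + (r + 1)) / (j + (r + 1))! := by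
  rw [poissonSurvival, ← (hasSum_poisson x).tsum_eq,
    ← (hasSum_poisson x).summable.sum_add_tsum_nat_add (r + 1), add_sub_cancel_left]

theorem poissonSurvival_pos (r : ℕ) {x : ℝ} (hx : 0 < x) : 0 < poissonSurvival r x := by
  rw [poissonSurvival_eq_tsum]
  exact ((summable_nat_add_iff (r + 1)).2 (hasSum_poisson x).summable).tsum_pos
    (fun j => by positivity) 0 (by positivity)

theorem hasDerivAt_poissonSurvival (r : ℕ) (x : ℝ) :
    HasDerivAt (poissonSurvival r) (exp (-x) * x ^ r / r !) x := by
  induction r with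
  | zero =>
    have h0 : poissonSurvival 0 = fun x => 1 - exp (-x) := by ext; simp [poissonSurvival]
    simpa [h0] using ((hasDerivAt_neg x).exp).const_sub 1
  | succ r ih =>
    have hterm : HasDerivAt (fun x => exp (-x) * x ^ (r + 1) / (r + 1)!)
        (exp (-x) * x ^ r / (r !) - exp (-x) * x ^ (r + 1) / (r + 1)!) x := by
      refine (((hasDerivAt_neg x).exp).mul (hasDerivAt_pow (r + 1) x)).div_const ((r + 1)! : ℝ)
        |>.congr_deriv ?_
      rw [Nat.factorial_succ]; push_cast; field_simp; ring
    have hsucc : poissonSurvival (r + 1) =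
        fun x => poissonSurvival r x - exp (-x) * x ^ (r + 1) / (r + 1)! := by
      ext x; rw [poissonSurvival, sum_range_succ, poissonSurvival]; ring
    rw [hsucc]
    exact (ih.sub hterm).congr_deriv (by ring)

theorem antitoneOn_logDeriv_poissonSurvival (r : ℕ) :
    AntitoneOn (logDeriv (poissonSurvival r)) (Set.Ioi 0) := by
  intro x (hx : 0 < x) y (hy : 0 < y) hxy
  simp only [logDeriv_apply, (hasDerivAt_poissonSurvival r _).deriv]
  rw [div_le_div_iff₀ (poissonSurvival_pos r hy) (poissonSurvival_pos r hx),
    poissonSurvival_eq_tsum, poissonSurvival_eq_tsum, ← tsum_mul_left, ← tsum_mul_left]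
  have hsum (z : ℝ) := (summable_nat_add_iff (r + 1)).2 (hasSum_poisson z).summable
  refine (hsum x).mul_left _ |>.tsum_le_tsum (fun j => ?_) ((hsum y).mul_left _)
  have hc : 0 ≤ exp (-y) * exp (-x) * (x * y) ^ r / (r ! * (j + (r + 1))!) := by positivity
  have hpow := pow_le_pow_left₀ hx.le hxy (j + 1)
  calc exp (-y) * y ^ r / r ! * (exp (-x) * x ^ (j + (r + 1)) / (j + (r + 1))!)
      = exp (-y) * exp (-x) * (x * y) ^ r / (r ! * (j + (r + 1))!) * x ^ (j + 1) := by ring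
    _ ≤ exp (-y) * exp (-x) * (x * y) ^ r / (r ! * (j + (r + 1))!) * y ^ (j + 1) :=
      mul_le_mul_of_nonneg_left hpow hc
    _ = exp (-x) * x ^ r / r ! * (exp (-y) * y ^ (j + (r + 1)) / (j + (r + 1))!) := by ring

theorem concaveOn_log_poissonSurvival (r : ℕ) :
    ConcaveOn ℝ (Set.Ioi 0) (fun x => log (poissonSurvival r x)) := by
  have hderiv (x : ℝ) (hx : x ∈ Set.Ioi 0) : HasDerivAt (fun x => log (poissonSurvival r x))
      (logDeriv (poissonSurvival r) x) x := by
    rw [logDeriv_apply, (hasDerivAt_poissonSurvival r x).deriv]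
    exact (hasDerivAt_poissonSurvival r x).log (poissonSurvival_pos r hx).ne'
  refine AntitoneOn.concaveOn_of_deriv (convex_Ioi 0)
    (fun x hx => (hderiv x hx).continuousAt.continuousWithinAt) ?_ ?_ <;> rw [interior_Ioi]
  · exact fun x hx => (hderiv x hx).differentiableAt.differentiableWithinAt
  · exact (antitoneOn_logDeriv_poissonSurvival r).congr fun x hx => (hderiv x hx).deriv.symm

theorem Majorizes.prod_poissonSurvival_le {n : ℕ} {μ μ' : Fin n → ℝ} (hmaj : Majorizes μ μ')
    (hμ : ∀ i, 0 < μ i) (hμ' : ∀ i, 0 < μ' i) (r : ℕ) :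
    ∏ i, poissonSurvival r (μ i) ≤ ∏ i, poissonSurvival r (μ' i) := by
  have hpos {x : ℝ} (hx : 0 < x) := poissonSurvival_pos r hx
  rw [← log_le_log_iff (prod_pos fun i _ => hpos (hμ i)) (prod_pos fun i _ => hpos (hμ' i)),
    log_prod fun i _ => (hpos (hμ i)).ne', log_prod fun i _ => (hpos (hμ' i)).ne']
  exact hmaj.sum_le_sum_of_concaveOn_s9 (concaveOn_log_poissonSurvival r)
    (fun x hx => ((hasDerivAt_poissonSurvival r x).log (hpos hx).ne').differentiableAt) hμ hμ'

section Probability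

variable {Ω : Type*} [MeasurableSpace Ω] {P : Measure Ω}

-- `N` need not be measurable, so both inequalities come from subadditivity alone.
theorem measure_preimage_compl_eq_one_sub_sum {α : Type*} [Countable α] [IsProbabilityMeasure P]
    {N : Ω → α} (hN : ∑' a, P {ω | N ω = a} = 1) (s : Finset α) :
    P (N ⁻¹' (↑s)ᶜ) = 1 - ∑ a ∈ s, P {ω | N ω = a} := by
  have hunion (t : Set α) : N ⁻¹' t = ⋃ a ∈ t, {ω | N ω = a} := by ext; simp
  have hcover := ENNReal.sum_add_tsum_compl s (fun a => P {ω | N ω = a})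
  rw [hN] at hcover
  have hfin : ∑ a ∈ s, P {ω | N ω = a} ≠ ∞ :=
    ne_top_of_le_ne_top ENNReal.one_ne_top (hcover ▸ le_self_add)
  apply le_antisymm
  · rw [← ENNReal.eq_sub_of_add_eq hfin ((add_comm _ _).trans hcover), hunion]
    exact measure_biUnion_le P (Set.to_countable _) _
  · rw [tsub_le_iff_right]
    calc 1 = P (N ⁻¹' (↑s)ᶜ ∪ N ⁻¹' ↑s) := by simp
      _ ≤ P (N ⁻¹' (↑s)ᶜ) + P (N ⁻¹' ↑s) := measure_union_le _ _
      _ ≤ P (N ⁻¹' (↑s)ᶜ) + ∑ a ∈ s, P {ω | N ω = a} := by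
        rw [hunion ↑s]; gcongr; exact measure_biUnion_finset_le s _

theorem measure_lt_eq_poissonSurvival [IsProbabilityMeasure P] {N : Ω → ℕ} {m : ℝ} (hm : 0 ≤ m)
    (hN : ∀ k, P {ω | N ω = k} = ENNReal.ofReal (exp (-m) * m ^ k / k !)) (r : ℕ) :
    P {ω | r < N ω} = ENNReal.ofReal (poissonSurvival r m) := by
  have hq (k : ℕ) : 0 ≤ exp (-m) * m ^ k / k ! := by positivity
  have htot : ∑' k, P {ω | N ω = k} = 1 := by
    simp_rw [hN]
    rw [← ENNReal.ofReal_tsum_of_nonneg hq (hasSum_poisson m).summable,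
      (hasSum_poisson m).tsum_eq, ENNReal.ofReal_one]
  have hset : {ω | r < N ω} = N ⁻¹' (↑(range (r + 1)))ᶜ := by ext; simp
  rw [hset, measure_preimage_compl_eq_one_sub_sum htot, poissonSurvival,
    ENNReal.ofReal_sub _ (sum_nonneg fun k _ => hq k), ENNReal.ofReal_one,
    ENNReal.ofReal_sum_of_nonneg fun k _ => hq k]
  simp_rw [hN]

theorem ProbabilityTheory.iIndepFun.measure_forall_mem_eq_prod {ι β : Type*} [Fintype ι]
    [MeasurableSpace β] {X : ι → Ω → β} (hX : iIndepFun X P) {s : ι → Set β}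
    (hs : ∀ i, MeasurableSet (s i)) :
    P {ω | ∀ i, X i ω ∈ s i} = ∏ i, P (X i ⁻¹' s i) := by
  convert hX.measure_inter_preimage_eq_mul univ fun i _ => hs i
  ext; simp

theorem measure_forall_lt_eq_prod_poissonSurvival [IsProbabilityMeasure P] {n : ℕ}
    {X : Fin n → Ω → ℕ} {μ : Fin n → ℝ} (hX : iIndepFun X P) (hμ : ∀ i, 0 ≤ μ i)
    (hlaw : ∀ i k, P {ω | X i ω = k} = ENNReal.ofReal (exp (-μ i) * μ i ^ k / k !)) (r : ℕ) :
    P {ω | ∀ i, r < X i ω} = ENNReal.ofReal (∏ i, poissonSurvival r (μ i)) := by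
  rw [ENNReal.ofReal_prod_of_nonneg fun i _ => ?_]
  · simp_rw [← measure_lt_eq_poissonSurvival (hμ _) (hlaw _)]
    exact hX.measure_forall_mem_eq_prod (s := fun _ => Set.Ioi r) fun _ => .of_discrete
  · rw [poissonSurvival_eq_tsum]
    exact tsum_nonneg fun j => by have := hμ i; positivity

end Probability

theorem poisson_min_stochastic_order {Ω : Type*} [MeasurableSpace Ω]
    (P : Measure Ω) [IsProbabilityMeasure P] (n : ℕ)
    (X Y : Fin n → Ω → ℕ) (μ μ' : Fin n → ℝ)
    (hμ : ∀ i, 0 < μ i) (hμ' : ∀ i, 0 < μ' i)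
    (hXind : iIndepFun X P)
    (hYind : iIndepFun Y P)
    (hX : ∀ i k, P {ω | X i ω = k} =
      ENNReal.ofReal (Real.exp (-μ i) * μ i ^ k / (k.factorial : ℝ)))
    (hY : ∀ i k, P {ω | Y i ω = k} =
      ENNReal.ofReal (Real.exp (-μ' i) * μ' i ^ k / (k.factorial : ℝ)))
    (hmaj : Majorizes μ μ') (r : ℕ) :
    P {ω | ∀ i, r < X i ω} ≤ P {ω | ∀ i, r < Y i ω} := by
  rw [measure_forall_lt_eq_prod_poissonSurvival hXind (fun i => (hμ i).le) hX,
    measure_forall_lt_eq_prod_poissonSurvival hYind (fun i => (hμ' i).le) hY]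
  exact ENNReal.ofReal_le_ofReal (hmaj.prod_poissonSurvival_le hμ hμ' r)
end

section
/- For any nonnegative integer u and real numbers 0 < q_j ≤ q_i < 1, the inequality (u+1) q_j^u (1 - q_i^{u+1}) ≤ (u+1) q_i^u (1 - q_j^{u+1}) holds; equivalently, q_j^u - q_i^u + q_i^u q_j^u (q_j - q_i) ≤ 0. -/
theorem geometric_key_inequality (u : ℕ) (qi qj : ℝ)
    (h0 : 0 < qj) (hji : qj ≤ qi) (h1 : qi < 1) :
    ((u : ℝ) + 1) * qj ^ u * (1 - qi ^ (u + 1))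
        ≤ ((u : ℝ) + 1) * qi ^ u * (1 - qj ^ (u + 1)) ∧
    qj ^ u - qi ^ u + qi ^ u * qj ^ u * (qj - qi) ≤ 0 := by
  have hqi : 0 < qi := lt_of_lt_of_le h0 hji
  have ha : qj ^ u ≤ qi ^ u := pow_le_pow_left₀ h0.le hji u
  have hpj : (0:ℝ) < qj ^ u := pow_pos h0 u
  have hpi : (0:ℝ) < qi ^ u := pow_pos hqi u
  have hb : 0 ≤ qi ^ u * qj ^ u * (qi - qj) := mul_nonneg (by positivity) (sub_nonneg.mpr hji)
  constructor
  · have key : qj ^ u * (1 - qi ^ (u + 1)) ≤ qi ^ u * (1 - qj ^ (u + 1)) := by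
      rw [pow_succ, pow_succ]
      nlinarith
    have hu : (0:ℝ) < (u : ℝ) + 1 := by positivity
    calc ((u : ℝ) + 1) * qj ^ u * (1 - qi ^ (u + 1))
        = ((u : ℝ) + 1) * (qj ^ u * (1 - qi ^ (u + 1))) := by ring
      _ ≤ ((u : ℝ) + 1) * (qi ^ u * (1 - qj ^ (u + 1))) := by
          exact mul_le_mul_of_nonneg_left key hu.le
      _ = ((u : ℝ) + 1) * qi ^ u * (1 - qj ^ (u + 1)) := by ring
  · nlinarith
end

section
/- For any nonnegative integer r and 0 < μ_j ≤ μ_i, the inequality e^{-μ_i} μ_i^r / ∫_0^{μ_i} e^{-t} t^r dt ≤ e^{-μ_j} μ_j^r / ∫_0^{μ_j} e^{-t} t^r dt holds. -/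
open MeasureTheory

lemma lg_key (r : ℕ) (μ : ℝ) (hμ : 0 < μ) :
    (∫ t in (0 : ℝ)..μ, Real.exp (-t) * t ^ r)
      = Real.exp (-μ) * μ ^ r *
        (μ * ∫ s in (0 : ℝ)..1, Real.exp ((1 - s) * μ) * s ^ r) := by
  have h := intervalIntegral.smul_integral_comp_mul_left
    (fun t => Real.exp (-t) * t ^ r) (a := 0) (b := 1) μ
  simp only [mul_zero, mul_one] at h
  rw [← h, smul_eq_mul]
  have heq : (∫ x in (0:ℝ)..1, Real.exp (-(μ * x)) * (μ * x) ^ r)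
      = Real.exp (-μ) * μ ^ r * ∫ s in (0:ℝ)..1, Real.exp ((1 - s) * μ) * s ^ r := by
    rw [← intervalIntegral.integral_const_mul]
    apply intervalIntegral.integral_congr
    intro s _
    simp only
    rw [show Real.exp (-μ) * μ ^ r * (Real.exp ((1 - s) * μ) * s ^ r)
        = (Real.exp (-μ) * Real.exp ((1 - s) * μ)) * (μ ^ r * s ^ r) by ring,
      ← Real.exp_add, mul_pow]
    congr 1
    ring
  rw [heq]; ring

theorem lower_gamma_ratio_ineq (r : ℕ) (μi μj : ℝ) (h0 : 0 < μj) (hji : μj ≤ μi) :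
    Real.exp (-μi) * μi ^ r / ∫ t in (0 : ℝ)..μi, Real.exp (-t) * t ^ r
      ≤ Real.exp (-μj) * μj ^ r / ∫ t in (0 : ℝ)..μj, Real.exp (-t) * t ^ r := by
  have h0i : 0 < μi := lt_of_lt_of_le h0 hji
  set G : ℝ → ℝ := fun μ => ∫ s in (0 : ℝ)..1, Real.exp ((1 - s) * μ) * s ^ r with hG
  have hcont : ∀ μ : ℝ, Continuous fun s : ℝ => Real.exp ((1 - s) * μ) * s ^ r := by
    intro μ; fun_prop
  have hGpos : ∀ μ : ℝ, 0 < G μ := by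
    intro μ
    apply intervalIntegral.intervalIntegral_pos_of_pos_on
      ((hcont μ).intervalIntegrable _ _)
    · intro x hx
      exact mul_pos (Real.exp_pos _) (pow_pos hx.1 r)
    · norm_num
  have hGmono : G μj ≤ G μi := by
    apply intervalIntegral.integral_mono_on (by norm_num)
      ((hcont μj).intervalIntegrable _ _) ((hcont μi).intervalIntegrable _ _)
    intro s hs
    have h1s : 0 ≤ 1 - s := by linarith [hs.2]
    have : (1 - s) * μj ≤ (1 - s) * μi := mul_le_mul_of_nonneg_left hji h1s
    exact mul_le_mul_of_nonneg_right (Real.exp_le_exp.mpr this)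
      (pow_nonneg hs.1 r)
  rw [lg_key r μi h0i, lg_key r μj h0]
  have hposi : 0 < Real.exp (-μi) * μi ^ r := mul_pos (Real.exp_pos _) (pow_pos h0i r)
  have hposj : 0 < Real.exp (-μj) * μj ^ r := mul_pos (Real.exp_pos _) (pow_pos h0 r)
  rw [div_le_div_iff₀ (mul_pos hposi (mul_pos h0i (hGpos μi)))
      (mul_pos hposj (mul_pos h0 (hGpos μj)))]
  have hmul : μj * G μj ≤ μi * G μi :=
    mul_le_mul hji hGmono (hGpos μj).le h0i.le
  calc Real.exp (-μi) * μi ^ r * (Real.exp (-μj) * μj ^ r * (μj * G μj))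
      ≤ Real.exp (-μi) * μi ^ r * (Real.exp (-μj) * μj ^ r * (μi * G μi)) := by
        apply mul_le_mul_of_nonneg_left (mul_le_mul_of_nonneg_left hmul hposj.le) hposi.le
    _ = Real.exp (-μj) * μj ^ r * (Real.exp (-μi) * μi ^ r * (μi * G μi)) := by ring
end

section
/- If a nonnegative random variable Z has a continuously differentiable, positive, log-concave density f on (0, ∞), then its hazard rate h(z) = f(z) / ∫_z^∞ f(t) dt is increasing on (0, ∞). -/
/-!
Log-concavity of `f` makes `s ↦ f (s + c) / f s` nonincreasing for `c ≥ 0`, so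
`f x * f (s + c) ≤ f (x + c) * f s` whenever `x ≤ s`. Integrating over `s > x` and translating the
left-hand integral gives `f x * H (x + c) ≤ f (x + c) * H x` for the survival function `H`, which is
the monotonicity of the hazard rate `f / H`.
-/

open MeasureTheory Set

theorem ConcaveOn.add_le_add_shift {𝕜 β : Type*} [Field 𝕜] [LinearOrder 𝕜] [IsStrictOrderedRing 𝕜]
    [AddCommGroup β] [PartialOrder β] [IsOrderedAddMonoid β] [Module 𝕜 β]
    {S : Set 𝕜} {g : 𝕜 → β} (hg : ConcaveOn 𝕜 S g) {x s c : 𝕜}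
    (hx : x ∈ S) (hsc : s + c ∈ S) (hxs : x ≤ s) (hc : 0 ≤ c) :
    g x + g (s + c) ≤ g (x + c) + g s := by
  rcases hc.eq_or_lt with rfl | hc
  · simp
  have hd : 0 < s + c - x := by linarith
  -- `x + c` and `s` are the convex combinations of `x` and `s + c` with weights `(1 - θ, θ)` and
  -- `(θ, 1 - θ)`.
  set θ := c / (s + c - x)
  have hθ : θ * (s + c - x) = c := div_mul_cancel₀ _ hd.ne'
  have hθ0 : 0 ≤ θ := by positivity
  have hθ1 : 0 ≤ 1 - θ := by
    rw [sub_nonneg, div_le_one hd]; linarith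
  have hleft := hg.2 hx hsc hθ1 hθ0 (sub_add_cancel 1 θ)
  have hright := hg.2 hx hsc hθ0 hθ1 (add_sub_cancel θ 1)
  rw [show (1 - θ) • x + θ • (s + c) = x + c by simp only [smul_eq_mul]; linear_combination hθ]
    at hleft
  rw [show θ • x + (1 - θ) • (s + c) = s by simp only [smul_eq_mul]; linear_combination -hθ]
    at hright
  calc g x + g (s + c) = ((1 - θ) • g x + θ • g (s + c)) + (θ • g x + (1 - θ) • g (s + c)) := by
        module
    _ ≤ g (x + c) + g s := add_le_add hleft hright

theorem mul_le_mul_shift_of_concaveOn_log {S : Set ℝ} {f : ℝ → ℝ}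
    (hf : ConcaveOn ℝ S fun z => Real.log (f z)) (hpos : ∀ z ∈ S, 0 < f z) {x s c : ℝ}
    (hx : x ∈ S) (hsc : s + c ∈ S) (hxs : x ≤ s) (hc : 0 ≤ c) :
    f x * f (s + c) ≤ f (x + c) * f s := by
  have hmem : ∀ z ∈ Icc x (s + c), 0 < f z := fun z hz => hpos z (hf.1.ordConnected.out hx hsc hz)
  have hxc := hmem (x + c) ⟨by linarith, by linarith⟩
  have hs := hmem s ⟨hxs, by linarith⟩
  rw [← Real.log_le_log_iff (mul_pos (hpos x hx) (hpos _ hsc)) (mul_pos hxc hs),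
    Real.log_mul (hpos x hx).ne' (hpos _ hsc).ne', Real.log_mul hxc.ne' hs.ne']
  exact hf.add_le_add_shift hx hsc hxs hc

theorem integrableOn_Ioi_comp_add_right {E : Type*} [NormedAddCommGroup E] {f : ℝ → E}
    (x c : ℝ) :
    IntegrableOn (fun t => f (t + c)) (Ioi x) ↔ IntegrableOn f (Ioi (x + c)) := by
  rw [← image_add_const_Ioi]
  exact ((measurePreserving_add_right volume c).integrableOn_image
    (measurableEmbedding_addRight c)).symm

theorem integral_Ioi_comp_add_right {E : Type*} [NormedAddCommGroup E] [NormedSpace ℝ E]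
    (f : ℝ → E) (x c : ℝ) :
    ∫ t in Ioi x, f (t + c) = ∫ t in Ioi (x + c), f t := by
  rw [← image_add_const_Ioi]
  exact ((measurePreserving_add_right volume c).setIntegral_image_emb
    (measurableEmbedding_addRight c) f (Ioi x)).symm

theorem mul_integral_Ioi_add_le_of_forall_le {f : ℝ → ℝ} {x c u v : ℝ}
    (hf : IntegrableOn f (Ioi x)) (hc : 0 ≤ c) (h : ∀ s ∈ Ioi x, u * f (s + c) ≤ v * f s) :
    u * ∫ t in Ioi (x + c), f t ≤ v * ∫ t in Ioi x, f t := by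
  have hshift : IntegrableOn (fun t => f (t + c)) (Ioi x) :=
    (integrableOn_Ioi_comp_add_right x c).2 (hf.mono_set (Ioi_subset_Ioi (by linarith)))
  rw [← integral_Ioi_comp_add_right, ← integral_const_mul, ← integral_const_mul]
  exact setIntegral_mono_on (hshift.const_mul u) (hf.const_mul v) measurableSet_Ioi h

theorem log_concave_density_increasing_hazard_general (f : ℝ → ℝ)
    (hpos : ∀ z ∈ Set.Ioi (0 : ℝ), 0 < f z)
    (hint : IntegrableOn f (Set.Ioi 0))
    (hsurv : ∀ z ∈ Set.Ioi (0 : ℝ), 0 < ∫ t in Set.Ioi z, f t)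
    (hlc : ConcaveOn ℝ (Set.Ioi 0) (fun z => Real.log (f z))) :
    MonotoneOn (fun z => f z / ∫ t in Set.Ioi z, f t) (Set.Ioi 0) := by
  intro x hx y hy hxy
  obtain ⟨c, hc, rfl⟩ : ∃ c, 0 ≤ c ∧ y = x + c := ⟨y - x, sub_nonneg.2 hxy, by ring⟩
  rw [div_le_div_iff₀ (hsurv x hx) (hsurv _ hy)]
  refine mul_integral_Ioi_add_le_of_forall_le (hint.mono_set (Ioi_subset_Ioi hx.le)) hc
    fun s hs => ?_
  exact mul_le_mul_shift_of_concaveOn_log hlc hpos hx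
    (add_pos_of_pos_of_nonneg (lt_trans hx hs) hc) hs.le hc

/-- Barlow–Proschan: a continuously differentiable, positive, log-concave density on
`(0, ∞)` has increasing hazard rate. -/
theorem log_concave_density_increasing_hazard (f : ℝ → ℝ)
    (hdiff : ContDiffOn ℝ 1 f (Set.Ioi 0))
    (hpos : ∀ z ∈ Set.Ioi (0 : ℝ), 0 < f z)
    (hint : IntegrableOn f (Set.Ioi 0))
    (hsurv : ∀ z ∈ Set.Ioi (0 : ℝ), 0 < ∫ t in Set.Ioi z, f t)
    (hlc : ConcaveOn ℝ (Set.Ioi 0) (fun z => Real.log (f z))) :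
    MonotoneOn (fun z => f z / ∫ t in Set.Ioi z, f t) (Set.Ioi 0) :=
  log_concave_density_increasing_hazard_general f hpos hint hsurv hlc
end
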